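/- Suppose G : ℝ → ℝ is a C² function satisfying -G''(x) + U''(H_{0,1}(x)) G(x) = [U''(H_{0,1}(x)) - 2] e^{-√2 x} + 8√2 H'_{0,1}(x), with G and G' of at most polynomial-times-exponential decay so that all integrals converge and boundary terms vanish. Then ∫_ℝ U'''(H_{0,1}(x)) H'_{0,1}(x)² G(x) dx = -∫_ℝ U'(H_{0,1}(x)) [U''(H_{0,1}(x)) - 2] e^{-√2 x} dx, where U(φ) = φ²(1-φ²)². -/

import Mathlib

/-!
Let `L = -∂² + U''(H)`. Differentiating `H'' = U'(H)` gives the kernel property `L H' = 0`, and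
once more `L H'' = -U'''(H) H'²`. Green's identity `(u G' - u' G)' = (L u) G - u (L G)` with
`u = H''` and `L G` taken from the ODE shows that `W(H'', G) + 4√2 H'²` is a primitive of minus the
sum of the two integrands, so the claim is that this primitive vanishes at `±∞`. Since
`H'' = √2 (1 - 3H²) H'`, `W(H'', G)` is a bounded combination of `W(H', G)`, which tends to zero by
hypothesis, and of `H'² G`, which tends to zero because `(G / H')' = W(H', G) / H'²` while `H'`
decays exponentially at both ends.
-/

open Real MeasureTheory Filter

noncomputable def U (φ : ℝ) : ℝ := φ ^ 2 * (1 - φ ^ 2) ^ 2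

noncomputable def H (x : ℝ) : ℝ :=
  Real.exp (Real.sqrt 2 * x) / Real.sqrt (1 + Real.exp (2 * Real.sqrt 2 * x))

open Topology

noncomputable def wronskian (u v : ℝ → ℝ) (x : ℝ) : ℝ := u x * deriv v x - deriv u x * v x

theorem tendsto_exp_neg_mul_atTop {a : ℝ} (ha : 0 < a) :
    Tendsto (fun x => exp (-a * x)) atTop (𝓝 0) :=
  tendsto_exp_atBot.comp (tendsto_id.const_mul_atTop_of_neg (neg_neg_of_pos ha))

theorem hasDerivAt_div_wronskian {p G : ℝ → ℝ} {x : ℝ} (hp : DifferentiableAt ℝ p x)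
    (hG : DifferentiableAt ℝ G x) (hpx : p x ≠ 0) :
    HasDerivAt (fun y => G y / p y) (wronskian p G x / p x ^ 2) x :=
  (hG.hasDerivAt.div hp.hasDerivAt hpx).congr_deriv (by unfold wronskian; ring)

/-- By `hasDerivAt_div_wronskian`, `G / p` grows at most like `exp (2 a x)`, while `p ^ 3` decays
like `exp (-3 a x)`. -/
theorem tendsto_sq_mul_atTop_of_abs_wronskian_le {p G : ℝ → ℝ} {a c C M : ℝ}
    (ha : 0 < a) (hc : 0 < c) (hp : Differentiable ℝ p) (hG : Differentiable ℝ G)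
    (hlow : ∀ᶠ x in atTop, c * exp (-a * x) ≤ p x)
    (hup : ∀ᶠ x in atTop, p x ≤ C * exp (-a * x))
    (hW : ∀ᶠ x in atTop, |wronskian p G x| ≤ M) :
    Tendsto (fun x => p x ^ 2 * G x) atTop (𝓝 0) := by
  obtain ⟨x₀, hx₀⟩ := eventually_atTop.1 (hlow.and (hup.and hW))
  have hpos : ∀ x ≥ x₀, 0 < p x := fun x hx =>
    (mul_pos hc (exp_pos _)).trans_le (hx₀ x hx).1
  have hM : 0 ≤ M := (abs_nonneg _).trans (hx₀ x₀ le_rfl).2.2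
  set w := fun x => G x / p x
  set K := M / (2 * a * c ^ 2)
  have hexp : ∀ x, exp (-a * x) ^ 2 = (exp (2 * a * x))⁻¹ := fun x => by
    rw [← exp_nat_mul, ← exp_neg]; ring_nf
  have hw' : ∀ x ≥ x₀, ‖wronskian p G x / p x ^ 2‖ ≤ M / c ^ 2 * exp (2 * a * x) := by
    intro x hx
    obtain ⟨hlx, -, hWx⟩ := hx₀ x hx
    rw [norm_div, norm_pow, Real.norm_of_nonneg (hpos x hx).le]
    calc |wronskian p G x| / p x ^ 2 ≤ M / (c * exp (-a * x)) ^ 2 :=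
          div_le_div₀ hM hWx (by positivity) (pow_le_pow_left₀ (by positivity) hlx 2)
      _ = M / c ^ 2 * exp (2 * a * x) := by
          rw [mul_pow, hexp]
          field_simp
  have hB : ∀ x, HasDerivAt (fun x => K * exp (2 * a * x)) (M / c ^ 2 * exp (2 * a * x)) x :=
    fun x => (((hasDerivAt_id x).const_mul (2 * a)).exp.const_mul K).congr_deriv
      (by simp only [K]; field_simp; simp)
  have hwx : ∀ x ≥ x₀, ‖w x - w x₀‖ ≤ K * exp (2 * a * x) := fun x hx =>
    image_norm_le_of_norm_deriv_right_le_deriv_boundary (f := fun x => w x - w x₀)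
      (fun y hy => ((hasDerivAt_div_wronskian (hp y) (hG y) (hpos y hy.1).ne').sub_const
        _).continuousAt.continuousWithinAt)
      (fun y hy => ((hasDerivAt_div_wronskian (hp y) (hG y)
        (hpos y hy.1).ne').sub_const _).hasDerivWithinAt)
      (by simp; positivity) hB (fun y hy => hw' y hy.1) ⟨hx, le_rfl⟩
  refine squeeze_zero_norm' (a := fun x =>
      C ^ 3 * |w x₀| * exp (-a * x) ^ 3 + C ^ 3 * K * exp (-a * x)) ?_ ?_
  · filter_upwards [eventually_ge_atTop x₀] with x hx
    obtain ⟨hlx, hux, -⟩ := hx₀ x hx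
    have hGw : p x ^ 2 * G x = p x ^ 3 * w x := by
      simp only [w]; field_simp [(hpos x hx).ne']
    have hwle : |w x| ≤ |w x₀| + K * exp (2 * a * x) := by
      have := hwx x hx
      rw [Real.norm_eq_abs] at this
      linarith [abs_sub_abs_le_abs_sub (w x) (w x₀)]
    rw [hGw, norm_mul, norm_pow, Real.norm_of_nonneg (hpos x hx).le, Real.norm_eq_abs]
    calc p x ^ 3 * |w x| ≤ (C * exp (-a * x)) ^ 3 * (|w x₀| + K * exp (2 * a * x)) :=
          mul_le_mul (pow_le_pow_left₀ (hpos x hx).le hux 3) hwle (abs_nonneg _)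
            (pow_nonneg ((hpos x hx).le.trans hux) 3)
      _ = C ^ 3 * |w x₀| * exp (-a * x) ^ 3 + C ^ 3 * K * exp (-a * x) := by
          have h1 : exp (-a * x) ^ 2 * exp (2 * a * x) = 1 := by
            rw [hexp, inv_mul_cancel₀ (exp_pos _).ne']
          linear_combination C ^ 3 * K * exp (-a * x) * h1
  · simpa using (((tendsto_exp_neg_mul_atTop ha).pow 3).const_mul (C ^ 3 * |w x₀|)).add
      ((tendsto_exp_neg_mul_atTop ha).const_mul (C ^ 3 * K))

theorem tendsto_sq_mul_atBot_of_abs_wronskian_le {p G : ℝ → ℝ} {a c C M : ℝ}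
    (ha : 0 < a) (hc : 0 < c) (hp : Differentiable ℝ p) (hG : Differentiable ℝ G)
    (hlow : ∀ᶠ x in atBot, c * exp (a * x) ≤ p x)
    (hup : ∀ᶠ x in atBot, p x ≤ C * exp (a * x))
    (hW : ∀ᶠ x in atBot, |wronskian p G x| ≤ M) :
    Tendsto (fun x => p x ^ 2 * G x) atBot (𝓝 0) := by
  have hrefl : ∀ x, wronskian (fun y => p (-y)) (fun y => G (-y)) x = -wronskian p G (-x) := by
    intro x; simp only [wronskian, deriv_comp_neg]; ring
  have h := tendsto_sq_mul_atTop_of_abs_wronskian_le (p := fun y => p (-y))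
    (G := fun y => G (-y)) ha hc (hp.comp differentiable_neg) (hG.comp differentiable_neg)
    (by simpa using tendsto_neg_atTop_atBot.eventually hlow)
    (by simpa using tendsto_neg_atTop_atBot.eventually hup)
    (by simpa [hrefl] using tendsto_neg_atTop_atBot.eventually hW)
  simpa [Function.comp_def] using h.comp tendsto_neg_atBot_atTop

theorem hasDerivAt_wronskian {u v : ℝ → ℝ} {x : ℝ} (hu : DifferentiableAt ℝ u x)
    (hu' : DifferentiableAt ℝ (deriv u) x) (hv : DifferentiableAt ℝ v x)
    (hv' : DifferentiableAt ℝ (deriv v) x) :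
    HasDerivAt (wronskian u v) (u x * deriv (deriv v) x - deriv (deriv u) x * v x) x :=
  ((hu.hasDerivAt.mul hv'.hasDerivAt).sub (hu'.hasDerivAt.mul hv.hasDerivAt)).congr_deriv
    (by ring)

theorem hasDerivAt_U (φ : ℝ) : HasDerivAt U (2 * φ - 8 * φ ^ 3 + 6 * φ ^ 5) φ :=
  ((hasDerivAt_pow 2 φ).mul (((hasDerivAt_pow 2 φ).const_sub 1).pow 2)).congr_deriv
    (by simp; ring)

theorem deriv_U : deriv U = fun φ => 2 * φ - 8 * φ ^ 3 + 6 * φ ^ 5 :=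
  funext fun φ => (hasDerivAt_U φ).deriv

theorem hasDerivAt_deriv_U (φ : ℝ) : HasDerivAt (deriv U) (2 - 24 * φ ^ 2 + 30 * φ ^ 4) φ := by
  rw [deriv_U]
  exact ((((hasDerivAt_id φ).const_mul 2).sub ((hasDerivAt_pow 3 φ).const_mul 8)).add
    ((hasDerivAt_pow 5 φ).const_mul 6)).congr_deriv (by simp; ring)

theorem deriv_deriv_U : deriv (deriv U) = fun φ => 2 - 24 * φ ^ 2 + 30 * φ ^ 4 :=
  funext fun φ => (hasDerivAt_deriv_U φ).deriv

theorem differentiable_deriv_U : Differentiable ℝ (deriv U) := by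
  rw [deriv_U]; fun_prop

theorem differentiable_deriv_deriv_U : Differentiable ℝ (deriv (deriv U)) := by
  rw [deriv_deriv_U]; fun_prop

theorem exp_sqrt_two_mul_sq (x : ℝ) : exp (√2 * x) ^ 2 = exp (2 * √2 * x) := by
  rw [← exp_nat_mul]; ring_nf

theorem one_sub_H_sq (x : ℝ) : 1 - H x ^ 2 = (1 + exp (2 * √2 * x))⁻¹ := by
  have h : 0 < 1 + exp (2 * √2 * x) := by positivity
  rw [H, div_pow, sq_sqrt h.le, exp_sqrt_two_mul_sq]
  field_simp
  ring

theorem H_pos (x : ℝ) : 0 < H x := by unfold H; positivity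

theorem H_lt_one (x : ℝ) : H x < 1 := by
  have h : 0 < 1 - H x ^ 2 := by rw [one_sub_H_sq]; positivity
  nlinarith [H_pos x]

theorem hasDerivAt_H (x : ℝ) : HasDerivAt H (√2 * H x * (1 - H x ^ 2)) x := by
  have hI : 0 < 1 + exp (2 * √2 * x) := by positivity
  have hE : HasDerivAt (fun x => exp (√2 * x)) (exp (√2 * x) * √2) x := by
    simpa using ((hasDerivAt_id x).const_mul √2).exp
  have hD : HasDerivAt (fun x => √(1 + exp (2 * √2 * x)))
      (exp (2 * √2 * x) * (2 * √2) / (2 * √(1 + exp (2 * √2 * x)))) x := by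
    refine HasDerivAt.sqrt ?_ hI.ne'
    simpa using (((hasDerivAt_id x).const_mul (2 * √2)).exp).const_add 1
  refine (hE.div hD (sqrt_pos.2 hI).ne').congr_deriv ?_
  rw [one_sub_H_sq, H, ← exp_sqrt_two_mul_sq] at *
  have := (sqrt_pos.2 hI).ne'
  field_simp
  rw [sq_sqrt hI.le]
  ring

theorem differentiable_H : Differentiable ℝ H := fun x => (hasDerivAt_H x).differentiableAt

theorem deriv_H : deriv H = fun x => √2 * H x * (1 - H x ^ 2) :=
  funext fun x => (hasDerivAt_H x).deriv

theorem deriv_U_H (x : ℝ) : deriv U (H x) = √2 * (1 - 3 * H x ^ 2) * deriv H x := by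
  rw [deriv_U, deriv_H]
  linear_combination -(H x * (1 - H x ^ 2) * (1 - 3 * H x ^ 2)) * sq_sqrt (zero_le_two (α := ℝ))

theorem deriv_deriv_U_H (x : ℝ) :
    deriv (deriv U) (H x) = (√2 * (1 - 3 * H x ^ 2)) ^ 2 - 6 * √2 * H x * deriv H x := by
  rw [deriv_deriv_U, deriv_H]
  linear_combination -((1 - 3 * H x ^ 2) ^ 2 - 6 * H x ^ 2 * (1 - H x ^ 2)) *
    sq_sqrt (zero_le_two (α := ℝ))

theorem hasDerivAt_deriv_H (x : ℝ) : HasDerivAt (deriv H) (deriv U (H x)) x := by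
  rw [deriv_H, deriv_U_H]
  exact (((hasDerivAt_H x).const_mul √2).mul (((hasDerivAt_H x).pow 2).const_sub 1)).congr_deriv
    (by rw [deriv_H]; simp only [Pi.pow_apply]; ring)

theorem deriv_deriv_H : deriv (deriv H) = fun x => deriv U (H x) :=
  funext fun x => (hasDerivAt_deriv_H x).deriv

theorem hasDerivAt_deriv_deriv_H (x : ℝ) :
    HasDerivAt (deriv (deriv H)) (deriv (deriv U) (H x) * deriv H x) x := by
  rw [deriv_deriv_H]
  exact (differentiable_deriv_U _).hasDerivAt.comp x (differentiable_H x).hasDerivAt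

theorem hasDerivAt_deriv_deriv_deriv_H (x : ℝ) :
    HasDerivAt (deriv (deriv (deriv H)))
      (deriv (deriv (deriv U)) (H x) * deriv H x ^ 2 + deriv (deriv U) (H x) * deriv U (H x))
      x := by
  rw [show deriv (deriv (deriv H)) = _ from funext fun x => (hasDerivAt_deriv_deriv_H x).deriv]
  exact (((differentiable_deriv_deriv_U _).hasDerivAt.comp x (differentiable_H x).hasDerivAt).mul
    (hasDerivAt_deriv_H x)).congr_deriv (by simp only [Function.comp_apply]; ring)

theorem deriv_H_le_sqrt_two_mul_exp_neg (x : ℝ) : deriv H x ≤ √2 * exp (-(2 * √2) * x) := by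
  calc deriv H x = √2 * H x * (1 - H x ^ 2) := by rw [deriv_H]
    _ ≤ √2 * 1 * (1 + exp (2 * √2 * x))⁻¹ := by
        rw [one_sub_H_sq]; gcongr; exact (H_lt_one x).le
    _ ≤ √2 * exp (-(2 * √2) * x) := by
        rw [mul_one, neg_mul, exp_neg]; gcongr; linarith

theorem exp_neg_le_two_mul_deriv_H {x : ℝ} (hx : 0 ≤ x) : exp (-(2 * √2) * x) ≤ 2 * deriv H x := by
  have hE : 1 ≤ exp (2 * √2 * x) := one_le_exp (by positivity)
  have hH : 1 ≤ √2 * H x := by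
    have h2 : 1 - H x ^ 2 ≤ 2⁻¹ := by
      rw [one_sub_H_sq]; exact inv_anti₀ two_pos (by linarith)
    nlinarith [sq_sqrt (zero_le_two (α := ℝ)), H_pos x, sqrt_nonneg 2]
  have h1 : 0 < 1 - H x ^ 2 := by rw [one_sub_H_sq]; positivity
  calc exp (-(2 * √2) * x) ≤ 2 * (1 + exp (2 * √2 * x))⁻¹ := by
        rw [neg_mul, exp_neg]
        field_simp
        linarith
    _ ≤ 2 * deriv H x := by
        rw [← one_sub_H_sq, deriv_H]; nlinarith

theorem deriv_H_le_sqrt_two_mul_exp (x : ℝ) : deriv H x ≤ √2 * exp (√2 * x) := by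
  have hH : H x ≤ exp (√2 * x) :=
    div_le_self (exp_pos _).le (one_le_sqrt.2 (by linarith [exp_pos (2 * √2 * x)]))
  have h1 : 0 < 1 - H x ^ 2 := by rw [one_sub_H_sq]; positivity
  have h2 : 1 - H x ^ 2 ≤ 1 := by nlinarith [H_pos x]
  rw [deriv_H]
  calc √2 * H x * (1 - H x ^ 2) ≤ √2 * H x * 1 := by
        gcongr; exact mul_nonneg (sqrt_nonneg 2) (H_pos x).le
    _ ≤ √2 * exp (√2 * x) := by rw [mul_one]; gcongr

theorem exp_le_two_mul_deriv_H {x : ℝ} (hx : x ≤ 0) : exp (√2 * x) ≤ 2 * deriv H x := by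
  have hE : exp (2 * √2 * x) ≤ 1 := exp_le_one_iff.2 (by nlinarith [sqrt_nonneg 2])
  have hH : exp (√2 * x) ≤ √2 * H x := by
    rw [H, mul_div_assoc', le_div_iff₀ (sqrt_pos.2 (by positivity))]
    calc exp (√2 * x) * √(1 + exp (2 * √2 * x)) ≤ exp (√2 * x) * √2 := by
          gcongr; linarith
      _ = √2 * exp (√2 * x) := mul_comm _ _
  have h1 : 2⁻¹ ≤ 1 - H x ^ 2 := by
    rw [one_sub_H_sq]; exact inv_anti₀ (by positivity) (by linarith)
  rw [deriv_H]
  nlinarith [exp_pos (√2 * x)]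

theorem deriv_H_pos (x : ℝ) : 0 < deriv H x := by
  have h : 0 < 1 - H x ^ 2 := by rw [one_sub_H_sq]; positivity
  rw [deriv_H]
  exact mul_pos (mul_pos (sqrt_pos.2 two_pos) (H_pos x)) h

theorem tendsto_deriv_H_atTop : Tendsto (deriv H) atTop (𝓝 0) :=
  squeeze_zero (fun x => (deriv_H_pos x).le) deriv_H_le_sqrt_two_mul_exp_neg
    (by simpa using (tendsto_exp_neg_mul_atTop (by positivity : (0 : ℝ) < 2 * √2)).const_mul √2)

theorem tendsto_deriv_H_atBot : Tendsto (deriv H) atBot (𝓝 0) :=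
  squeeze_zero (fun x => (deriv_H_pos x).le) deriv_H_le_sqrt_two_mul_exp
    (by simpa using (tendsto_exp_atBot.comp
      (tendsto_id.const_mul_atBot (sqrt_pos.2 two_pos))).const_mul √2)

theorem wronskian_deriv_deriv_H (G : ℝ → ℝ) (x : ℝ) :
    wronskian (deriv (deriv H)) G x =
      √2 * (1 - 3 * H x ^ 2) * wronskian (deriv H) G x + 6 * √2 * H x * (deriv H x ^ 2 * G x) := by
  rw [wronskian, wronskian, (hasDerivAt_deriv_deriv_H x).deriv, (hasDerivAt_deriv_H x).deriv,
    deriv_U_H, deriv_deriv_U_H]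
  ring

noncomputable def boundaryTerm (G : ℝ → ℝ) (x : ℝ) : ℝ :=
  wronskian (deriv (deriv H)) G x + 4 * √2 * deriv H x ^ 2

theorem tendsto_boundaryTerm {G : ℝ → ℝ} {l : Filter ℝ}
    (hW : Tendsto (wronskian (deriv H) G) l (𝓝 0))
    (hG : Tendsto (fun x => deriv H x ^ 2 * G x) l (𝓝 0)) (hH : Tendsto (deriv H) l (𝓝 0)) :
    Tendsto (boundaryTerm G) l (𝓝 0) := by
  have hk : IsBoundedUnder (· ≤ ·) l (norm ∘ fun x => √2 * (1 - 3 * H x ^ 2)) :=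
    isBoundedUnder_of ⟨3 * √2, fun x => by
      have h : H x ^ 2 ≤ 1 := by nlinarith [H_pos x, H_lt_one x]
      have hs := sqrt_nonneg 2
      rw [Function.comp_apply, Real.norm_eq_abs, abs_le]
      constructor <;> nlinarith [mul_nonneg hs (sq_nonneg (H x)), mul_nonneg hs (sub_nonneg.2 h)]⟩
  have hc : IsBoundedUnder (· ≤ ·) l (norm ∘ fun x => 6 * √2 * H x) :=
    isBoundedUnder_of ⟨6 * √2, fun x => by
      rw [Function.comp_apply, Real.norm_of_nonneg (by have := H_pos x; positivity)]
      have := H_lt_one x; have := sqrt_nonneg 2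
      nlinarith⟩
  unfold boundaryTerm
  simp only [wronskian_deriv_deriv_H]
  simpa using ((isBoundedUnder_le_mul_tendsto_zero hk hW).add
    (isBoundedUnder_le_mul_tendsto_zero hc hG)).add ((hH.pow 2).const_mul (4 * √2))

theorem hasDerivAt_boundaryTerm {G : ℝ → ℝ} {x : ℝ}
    (hG : DifferentiableAt ℝ G x) (hG' : DifferentiableAt ℝ (deriv G) x)
    (hode : -(deriv (deriv G) x) + deriv (deriv U) (H x) * G x =
      (deriv (deriv U) (H x) - 2) * exp (-√2 * x) + 8 * √2 * deriv H x) :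
    HasDerivAt (boundaryTerm G)
      (-(deriv (deriv (deriv U)) (H x) * deriv H x ^ 2 * G x +
        deriv U (H x) * (deriv (deriv U) (H x) - 2) * exp (-√2 * x))) x := by
  have hW := hasDerivAt_wronskian (hasDerivAt_deriv_deriv_H x).differentiableAt
    (hasDerivAt_deriv_deriv_deriv_H x).differentiableAt hG hG'
  refine (hW.add (((hasDerivAt_deriv_H x).pow 2).const_mul (4 * √2))).congr_deriv ?_
  rw [(hasDerivAt_deriv_deriv_deriv_H x).deriv, deriv_deriv_H]
  linear_combination (-deriv U (H x)) * hode

theorem integral_identity_from_ODE (G : ℝ → ℝ) (hG : ContDiff ℝ 2 G)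
    (hode : ∀ x : ℝ,
      -(deriv (deriv G) x) + deriv (deriv U) (H x) * G x =
        (deriv (deriv U) (H x) - 2) * Real.exp (-(Real.sqrt 2) * x) +
          8 * Real.sqrt 2 * deriv H x)
    (hint1 : Integrable (fun x => deriv (deriv (deriv U)) (H x) * (deriv H x) ^ 2 * G x))
    (hint2 : Integrable (fun x =>
      deriv U (H x) * (deriv (deriv U) (H x) - 2) * Real.exp (-(Real.sqrt 2) * x)))
    (hbd_top : Tendsto (fun x => deriv H x * deriv G x - deriv (deriv H) x * G x)
      atTop (nhds 0))
    (hbd_bot : Tendsto (fun x => deriv H x * deriv G x - deriv (deriv H) x * G x)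
      atBot (nhds 0)) :
    ∫ x : ℝ, deriv (deriv (deriv U)) (H x) * (deriv H x) ^ 2 * G x =
      -∫ x : ℝ, deriv U (H x) * (deriv (deriv U) (H x) - 2) *
        Real.exp (-(Real.sqrt 2) * x) := by
  have hG₁ : Differentiable ℝ G := hG.differentiable two_ne_zero
  have hG₂ : Differentiable ℝ (deriv G) :=
    (contDiff_succ_iff_deriv.mp hG).2.2.differentiable one_ne_zero
  have hH' : Differentiable ℝ (deriv H) := fun x => (hasDerivAt_deriv_H x).differentiableAt
  have hsq_top : Tendsto (fun x => deriv H x ^ 2 * G x) atTop (𝓝 0) :=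
    tendsto_sq_mul_atTop_of_abs_wronskian_le (by positivity) one_half_pos hH' hG₁
      (eventually_atTop.2 ⟨0, fun x hx => by linarith [exp_neg_le_two_mul_deriv_H hx]⟩)
      (Eventually.of_forall deriv_H_le_sqrt_two_mul_exp_neg)
      (hbd_top.abs.eventually (ge_mem_nhds (by simp : |(0 : ℝ)| < 1)))
  have hsq_bot : Tendsto (fun x => deriv H x ^ 2 * G x) atBot (𝓝 0) :=
    tendsto_sq_mul_atBot_of_abs_wronskian_le (sqrt_pos.2 two_pos) one_half_pos hH' hG₁
      (eventually_atBot.2 ⟨0, fun x hx => by linarith [exp_le_two_mul_deriv_H hx]⟩)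
      (Eventually.of_forall deriv_H_le_sqrt_two_mul_exp)
      (hbd_bot.abs.eventually (ge_mem_nhds (by simp : |(0 : ℝ)| < 1)))
  have h := integral_of_hasDerivAt_of_tendsto
    (fun x => hasDerivAt_boundaryTerm (hG₁ x) (hG₂ x) (hode x))
    (hint1.add hint2).neg
    (tendsto_boundaryTerm hbd_bot hsq_bot tendsto_deriv_H_atBot)
    (tendsto_boundaryTerm hbd_top hsq_top tendsto_deriv_H_atTop)
  rw [integral_neg, integral_add hint1 hint2] at h
  linarith
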